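/- Let T be a DFS spanning tree of a finite connected graph G rooted at r, and let v be a non-root vertex. Then v is the representative node of its bridge-connected component (i.e., v is an ancestor in T of every vertex bridge-equivalent to v) if and only if the parent edge of v is a bridge of G. -/

import Mathlib

/-- `u` is an ancestor of `v` in the spanning tree `T` rooted at `r`. -/
def SimpleGraph.IsAncestor {V : Type*} (T : SimpleGraph V) (r u v : V) : Prop :=
  ∀ p : T.Walk r v, p.IsPath → u ∈ p.support

/-- `u` and `v` are bridge-equivalent: `u = v` or there is a walk from `u` to `v`
none of whose edges is a bridge of `G`. -/
def SimpleGraph.BridgeEquiv {V : Type*} (G : SimpleGraph V) (u v : V) : Prop :=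
  u = v ∨ ∃ w : G.Walk u v, ∀ e ∈ w.edges, ¬ G.IsBridge e

namespace RepAux

open SimpleGraph Walk

variable {V : Type*} {T : SimpleGraph V} {r : V}

lemma exists_path (hT : T.IsTree) (x : V) : ∃ q : T.Walk r x, q.IsPath := by
  classical
  obtain ⟨w⟩ := hT.isConnected.preconnected r x
  exact ⟨w.bypass, w.bypass_isPath⟩

lemma path_unique (hT : T.IsTree) {x : V} (q q' : T.Walk r x) (hq : q.IsPath)
    (hq' : q'.IsPath) : q = q' := by
  obtain ⟨P, _, hu⟩ := hT.existsUnique_path r x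
  rw [hu q hq, hu q' hq']

lemma anc_of_path (hT : T.IsTree) {x d : V} (q : T.Walk r x) (hq : q.IsPath)
    (hd : d ∈ q.support) : T.IsAncestor r d x := by
  intro q' hq'
  rwa [path_unique hT q' q hq' hq]

lemma anc_refl (x : V) : T.IsAncestor r x x := fun q _ => q.end_mem_support

lemma anc_trans {a b c : V} (h1 : T.IsAncestor r a b) (h2 : T.IsAncestor r b c) :
    T.IsAncestor r a c := by
  classical
  intro q hq
  have hb : b ∈ q.support := h2 q hq
  have := h1 (q.takeUntil b hb) (hq.takeUntil hb)
  exact q.support_takeUntil_subset hb this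

lemma anc_antisymm (hT : T.IsTree) {a b : V} (h1 : T.IsAncestor r a b)
    (h2 : T.IsAncestor r b a) : a = b := by
  classical
  by_contra hne
  obtain ⟨q, hq⟩ := exists_path hT b
  have ha : a ∈ q.support := h1 q hq
  have hb2 : b ∈ (q.takeUntil a ha).support := h2 _ (hq.takeUntil ha)
  have hsp := hq.support_nodup
  rw [← q.take_spec ha, Walk.support_append] at hsp
  have hb3 : b ∈ (q.dropUntil a ha).support.tail := by
    have hend := (q.dropUntil a ha).end_mem_support
    rw [Walk.support_eq_cons, List.mem_cons] at hend
    rcases hend with h | h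
    · exact absurd h.symm hne
    · exact h
  exact List.disjoint_of_nodup_append hsp hb2 hb3

lemma anc_comparable (hT : T.IsTree) {x a b : V} (q : T.Walk r x) (hq : q.IsPath)
    (ha : a ∈ q.support) (hb : b ∈ q.support) :
    T.IsAncestor r a b ∨ T.IsAncestor r b a := by
  classical
  by_cases h : a ∈ (q.takeUntil b hb).support
  · exact Or.inl (anc_of_path hT _ (hq.takeUntil hb) h)
  · have ha' : a ∈ (q.dropUntil b hb).support := by
      have h2 := ha
      rw [← q.take_spec hb, Walk.mem_support_append_iff] at h2
      tauto
    right
    have hsplit : ((q.takeUntil b hb).append ((q.dropUntil b hb).takeUntil a ha')).append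
        ((q.dropUntil b hb).dropUntil a ha') = q := by
      rw [← Walk.append_assoc, Walk.take_spec, Walk.take_spec]
    have hWpath : ((q.takeUntil b hb).append ((q.dropUntil b hb).takeUntil a ha')).IsPath := by
      apply Walk.IsPath.of_append_left (q := (q.dropUntil b hb).dropUntil a ha')
      rw [hsplit]; exact hq
    refine anc_of_path hT _ hWpath ?_
    rw [Walk.mem_support_append_iff]
    exact Or.inl (q.takeUntil b hb).end_mem_support

end RepAux

open RepAux SimpleGraph Walk in
theorem representative_iff_parent_edge_bridge {V : Type*} [Fintype V]
    (G T : SimpleGraph V) (r : V)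
    (hG : G.Connected) (hle : T ≤ G) (hT : T.IsTree)
    (hdfs : ∀ x y : V, G.Adj x y →
      T.IsAncestor r x y ∨ T.IsAncestor r y x)
    (v p : V) (hvr : v ≠ r) (hparent : T.Adj p v ∧ T.IsAncestor r p v) :
    (∀ w : V, G.BridgeEquiv v w → T.IsAncestor r v w) ↔
      G.IsBridge s(p, v) := by
  classical
  obtain ⟨hadj, hanc⟩ := hparent
  have hpne : p ≠ v := hadj.ne
  have hvp : ¬ T.IsAncestor r v p := fun h => hpne (anc_antisymm hT hanc h)
  constructor
  · intro hall
    by_contra hnb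
    have hGadj : G.Adj p v := hle hadj
    have hbe : G.BridgeEquiv v p := by
      refine Or.inr ⟨Walk.cons hGadj.symm Walk.nil, ?_⟩
      intro e he
      simp only [Walk.edges_cons, Walk.edges_nil, List.mem_singleton] at he
      subst he
      rwa [Sym2.eq_swap]
    exact hvp (hall p hbe)
  · intro hb w hw
    -- the one-step lemma
    have step : ∀ x y : V, G.Adj x y → s(x, y) ≠ s(p, v) → T.IsAncestor r v x →
        T.IsAncestor r v y := by
      intro x y hxy hne hvx
      rcases hdfs x y hxy with h1 | h2
      · exact anc_trans hvx h1
      · obtain ⟨qx, hqx⟩ := exists_path hT x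
        have hvs : v ∈ qx.support := hvx qx hqx
        have hys : y ∈ qx.support := h2 qx hqx
        rcases anc_comparable hT qx hqx hvs hys with hvy | hyv
        · exact hvy
        · by_cases hyv' : y = v
          · subst hyv'; exact anc_refl y
          exfalso
          obtain ⟨qp, hqp⟩ := exists_path hT p
          have hvnp : v ∉ qp.support := fun h => hvp (anc_of_path hT qp hqp h)
          have hQ : (qp.concat hadj).IsPath := by
            rw [Walk.isPath_def, Walk.support_concat]
            exact List.Nodup.append hqp.support_nodup (List.nodup_singleton v)
              (by simpa using hvnp)
          have hyp' : y ∈ qp.support := by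
            have hy := hyv (qp.concat hadj) hQ
            rw [Walk.support_concat, List.mem_append] at hy
            rcases hy with h | h
            · exact h
            · simp only [List.mem_singleton] at h; exact absurd h hyv'
          have hpv_not_qp : s(p, v) ∉ qp.edges := fun h =>
            hvnp (qp.snd_mem_support_of_mem_edges h)
          have hW1 : s(p, v) ∉ ((qp.dropUntil y hyp').reverse).edges := by
            rw [Walk.edges_reverse, List.mem_reverse]
            exact fun h => hpv_not_qp (qp.edges_dropUntil_subset hyp' h)
          have hW3 : s(p, v) ∉ ((qx.dropUntil v hvs).reverse).edges := by
            rw [Walk.edges_reverse, List.mem_reverse]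
            intro h
            have hp_in : p ∈ (qx.dropUntil v hvs).support :=
              Walk.fst_mem_support_of_mem_edges _ h
            have hp_take : p ∈ (qx.takeUntil v hvs).support := hanc _ (hqx.takeUntil hvs)
            have hsp := hqx.support_nodup
            rw [← qx.take_spec hvs, Walk.support_append] at hsp
            have hp_tail : p ∈ (qx.dropUntil v hvs).support.tail := by
              rw [Walk.support_eq_cons, List.mem_cons] at hp_in
              rcases hp_in with h' | h'
              · exact absurd h' hpne
              · exact h'
            exact List.disjoint_of_nodup_append hsp hp_take hp_tail
          -- build a walk from p to v in G avoiding the edge s(p, v)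
          set W : G.Walk p v :=
            (((qp.dropUntil y hyp').reverse).mapLe hle).append
              (Walk.cons hxy.symm (((qx.dropUntil v hvs).reverse).mapLe hle))
          have hWe : s(p, v) ∉ W.edges := by
            intro hmem
            rw [Walk.edges_append, List.mem_append] at hmem
            rcases hmem with h | h
            · rw [Walk.edges_map] at h
              obtain ⟨e, he, heq⟩ := List.mem_map.mp h
              simp only [Hom.coe_ofLE, Sym2.map_id', id] at heq
              exact hW1 (heq ▸ he)
            · rw [Walk.edges_cons, List.mem_cons] at h
              rcases h with h | h
              · exact hne (Sym2.eq_swap.trans h.symm)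
              · rw [Walk.edges_map] at h
                obtain ⟨e, he, heq⟩ := List.mem_map.mp h
                simp only [Hom.coe_ofLE, Sym2.map_id', id] at heq
                exact hW3 (heq ▸ he)
          rw [isBridge_iff_adj_and_forall_walk_mem_edges] at hb
          exact hWe (hb W)
    rcases hw with rfl | ⟨Wk, hWk⟩
    · exact anc_refl v
    · have key : ∀ {x w' : V} (W : G.Walk x w'), (∀ e ∈ W.edges, ¬ G.IsBridge e) →
          T.IsAncestor r v x → T.IsAncestor r v w' := by
        intro x w' W
        induction W with
        | nil => exact fun _ h => h
        | @cons a b c h W ih =>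
          intro hE hvx
          refine ih (fun e he => hE e (by simp [he])) ?_
          refine step a b h (fun heq => hE s(a, b) (by simp) (heq ▸ hb)) hvx
      exact key Wk hWk (anc_refl v)
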